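/- Let P ⊆ ℝ³ be a three-dimensional reflexive polytope. Three lattice points x, y, z lying in a common facet of P form a ℤ-basis of ℤ³ if and only if the triangle conv(x, y, z) is two-dimensional and empty (its only lattice points are x, y, z). Consequently, every three-dimensional simplicial terminal reflexive polytope is a smooth Fano polytope. -/

import Mathlib

/-!
Scale the normal of a facet `F` of a reflexive polytope `P` to a point `u` with `⟨w, u⟩ = -1` on
`F`. Affinely independent points of `F` are then linearly independent, and three of them pin `u`
down as a vertex of `P*`, so `u` is a lattice point. Given a lattice point `w`, reduce its
coordinates in the basis `s = (x, y, z)` mod `1`: the point `w₀ = ∑ fᵢ • sᵢ` with `fᵢ ∈ [0, 1)`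
is again a lattice point, so `∑ fᵢ = -⟨w₀, u⟩` is one of `0, 1, 2`. The value `1` puts the
lattice point `w₀` into the triangle, the value `2` puts `x + y + z - w₀` there; if the triangle
is empty, only `0` is left, i.e. `w` has integer coordinates.

For a simplicial terminal reflexive polytope, each facet is the triangle on its three vertices and
its only lattice points are those vertices, so the criterion applies to every facet.
-/

open scoped BigOperators

noncomputable section

/-- The standard dot product on `ℝ^d`. -/
def dotProd {d : ℕ} (x y : Fin d → ℝ) : ℝ := ∑ i, x i * y i

/-- A point of `ℝ^d` is a lattice point (element of `ℤ^d`) if all coordinates are integers. -/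
def IsLatticePoint {d : ℕ} (x : Fin d → ℝ) : Prop := ∀ i, ∃ n : ℤ, x i = (n : ℝ)

/-- A lattice polytope is the convex hull of finitely many lattice points. -/
def IsLatticePolytope {d : ℕ} (P : Set (Fin d → ℝ)) : Prop :=
  ∃ V : Finset (Fin d → ℝ), (∀ v ∈ V, IsLatticePoint v) ∧ P = convexHull ℝ (V : Set (Fin d → ℝ))

/-- The dual polytope `P* = {y | ⟨x,y⟩ ≥ -1 ∀ x ∈ P}`. -/
def dualPolytope {d : ℕ} (P : Set (Fin d → ℝ)) : Set (Fin d → ℝ) :=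
  {y | ∀ x ∈ P, -1 ≤ dotProd x y}

/-- A reflexive polytope: a full-dimensional lattice polytope with `0` in its interior whose
dual polytope is again a lattice polytope. -/
def IsReflexive {d : ℕ} (P : Set (Fin d → ℝ)) : Prop :=
  IsLatticePolytope P ∧ (0 : Fin d → ℝ) ∈ interior P ∧ IsLatticePolytope (dualPolytope P)

/-- A face of `P`: the subset of `P` where some linear functional attains its maximum bound. -/
def IsFace {d : ℕ} (P F : Set (Fin d → ℝ)) : Prop :=
  ∃ (u : Fin d → ℝ) (c : ℝ), (∀ x ∈ P, dotProd u x ≤ c) ∧ F = {x ∈ P | dotProd u x = c}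

/-- A facet of a `d`-dimensional polytope: a nonempty face of dimension `d - 1`. -/
def IsFacet {d : ℕ} (P F : Set (Fin d → ℝ)) : Prop :=
  IsFace P F ∧ F.Nonempty ∧ Module.finrank ℝ (vectorSpan ℝ F) = d - 1

/-- `x ∼ y` : `x` and `y` lie in a common facet of `P`. -/
def SameFacet {d : ℕ} (P : Set (Fin d → ℝ)) (x y : Fin d → ℝ) : Prop :=
  ∃ F, IsFacet P F ∧ x ∈ F ∧ y ∈ F

/-- The star set of `x`: the union of all facets of `P` containing `x`. -/
def starSet {d : ℕ} (P : Set (Fin d → ℝ)) (x : Fin d → ℝ) : Set (Fin d → ℝ) :=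
  {y | SameFacet P x y}

/-- A family of lattice points forming a `ℤ`-basis of the lattice `ℤ^d`. -/
def IsZBasisFamily {d n : ℕ} (s : Fin n → (Fin d → ℝ)) : Prop :=
  LinearIndependent ℝ s ∧ (∀ i, IsLatticePoint (s i)) ∧
    ∀ z : Fin d → ℝ, IsLatticePoint z → ∃ c : Fin n → ℤ, z = ∑ i, (c i : ℝ) • s i

/-- A primitive lattice point: a nonzero lattice point such that no lattice point lies
strictly between `0` and it. -/
def IsPrimitivePoint {d : ℕ} (x : Fin d → ℝ) : Prop :=
  IsLatticePoint x ∧ x ≠ 0 ∧ ∀ y ∈ openSegment ℝ (0 : Fin d → ℝ) x, ¬ IsLatticePoint y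

/-- A Fano polytope: a full-dimensional lattice polytope with `0` in its interior all of whose
vertices are primitive lattice points. -/
def IsFanoPolytope {d : ℕ} (P : Set (Fin d → ℝ)) : Prop :=
  IsLatticePolytope P ∧ (0 : Fin d → ℝ) ∈ interior P ∧
    ∀ v ∈ Set.extremePoints ℝ P, IsPrimitivePoint v

/-- Canonical: the only interior lattice point is the origin. -/
def IsCanonicalPolytope {d : ℕ} (P : Set (Fin d → ℝ)) : Prop :=
  {x ∈ interior P | IsLatticePoint x} = {0}

/-- Terminal: the only lattice points of `P` are the origin and the vertices. -/
def IsTerminalPolytope {d : ℕ} (P : Set (Fin d → ℝ)) : Prop :=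
  {x ∈ P | IsLatticePoint x} = insert (0 : Fin d → ℝ) (Set.extremePoints ℝ P)

/-- Simplicial: every facet has exactly `d` vertices. -/
def IsSimplicial {d : ℕ} (P : Set (Fin d → ℝ)) : Prop :=
  ∀ F, IsFacet P F → (Set.extremePoints ℝ F).ncard = d

/-- Smooth: the vertices of every facet form a `ℤ`-basis of the lattice. -/
def IsSmoothPolytope {d : ℕ} (P : Set (Fin d → ℝ)) : Prop :=
  ∀ F, IsFacet P F → ∃ s : Fin d → (Fin d → ℝ),
    Set.extremePoints ℝ F = Set.range s ∧ IsZBasisFamily s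

/-- Semi-terminal: any two distinct vertices in a common facet are joined by a lattice-point
free segment. -/
def IsSemiTerminal {d : ℕ} (P : Set (Fin d → ℝ)) : Prop :=
  ∀ v ∈ Set.extremePoints ℝ P, ∀ w ∈ Set.extremePoints ℝ P, v ≠ w → SameFacet P v w →
    {x ∈ segment ℝ v w | IsLatticePoint x} = {v, w}

/-- The quotient space `ℝ^d / ℝv`. -/
abbrev QuotSpace {d : ℕ} (v : Fin d → ℝ) := (Fin d → ℝ) ⧸ (Submodule.span ℝ {v})

/-- The canonical projection `π_v : ℝ^d → ℝ^d/ℝv`. -/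
def projAlong {d : ℕ} (v : Fin d → ℝ) : (Fin d → ℝ) →ₗ[ℝ] QuotSpace v :=
  (Submodule.span ℝ {v}).mkQ

/-- The quotient lattice `ℤ^d/ℤv`, regarded as the image of `ℤ^d` in `ℝ^d/ℝv`. -/
def quotLattice {d : ℕ} (v : Fin d → ℝ) : Set (QuotSpace v) :=
  projAlong v '' {x | IsLatticePoint x}

/-- A primitive point of the quotient lattice `ℤ^d/ℤv`. -/
def QuotPrimitive {d : ℕ} (v : Fin d → ℝ) (q : QuotSpace v) : Prop :=
  q ∈ quotLattice v ∧ q ≠ 0 ∧ ∀ t ∈ openSegment ℝ (0 : QuotSpace v) q, t ∉ quotLattice v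

/-- A Fano polytope in the quotient space `ℝ^d/ℝv` with respect to the lattice `ℤ^d/ℤv`. -/
def QuotIsFanoPolytope {d : ℕ} (v : Fin d → ℝ) (Q : Set (QuotSpace v)) : Prop :=
  (∃ V : Finset (QuotSpace v), (∀ q ∈ V, q ∈ quotLattice v) ∧
      Q = convexHull ℝ (V : Set (QuotSpace v))) ∧
  (0 : QuotSpace v) ∈ interior Q ∧
  ∀ q ∈ Set.extremePoints ℝ Q, QuotPrimitive v q

/-- Unimodular equivalence: a real linear isomorphism mapping lattice onto lattice and one
polytope onto the other. -/
def LatticeEquivTo {d e : ℕ} (P : Set (Fin d → ℝ)) (Q : Set (Fin e → ℝ)) : Prop :=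
  ∃ f : (Fin d → ℝ) ≃ₗ[ℝ] (Fin e → ℝ),
    (∀ x, IsLatticePoint x ↔ IsLatticePoint (f x)) ∧ f '' P = Q

/-- The hexagon `Z₂ = conv(±(1,0), ±(0,1), ±(1,1)) ⊆ ℝ²`. -/
def Z2 : Set (Fin 2 → ℝ) :=
  convexHull ℝ ({![1,0], ![0,1], ![1,1], ![-1,0], ![0,-1], ![-1,-1]} : Set (Fin 2 → ℝ))

/-- The `j`-th coordinate pair of a point of `ℝ^{2m}`. -/
def pairCoords {m : ℕ} (x : Fin (2 * m) → ℝ) (j : Fin m) : Fin 2 → ℝ :=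
  fun i => x ⟨2 * (j : ℕ) + (i : ℕ), by have := j.isLt; have := i.isLt; omega⟩

/-- The `m`-fold product `Z₂ × ⋯ × Z₂ ⊆ ℝ^{2m}`. -/
def prodZ2 (m : ℕ) : Set (Fin (2 * m) → ℝ) := {x | ∀ j : Fin m, pairCoords x j ∈ Z2}

/-- The `j`-th coordinate pair of a point of `ℝ^{2m+1}` (first `2m` coordinates). -/
def pairCoords' {m : ℕ} (x : Fin (2 * m + 1) → ℝ) (j : Fin m) : Fin 2 → ℝ :=
  fun i => x ⟨2 * (j : ℕ) + (i : ℕ), by have := j.isLt; have := i.isLt; omega⟩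

/-- The product `[-1,1] × Z₂ × ⋯ × Z₂ ⊆ ℝ^{2m+1}` with `m` hexagon factors. -/
def boxProdZ2 (m : ℕ) : Set (Fin (2 * m + 1) → ℝ) :=
  {x | x ⟨2 * m, by omega⟩ ∈ Set.Icc (-1 : ℝ) 1 ∧ ∀ j : Fin m, pairCoords' x j ∈ Z2}

open Set

section General

variable {E : Type*} [AddCommGroup E] [Module ℝ E]

lemma vectorSpan_convexHull (s : Set E) :
    vectorSpan ℝ (convexHull ℝ s) = vectorSpan ℝ s := by
  rw [← direction_affineSpan, affineSpan_convexHull, direction_affineSpan]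

lemma convexHull_range_eq_image_stdSimplex {ι : Type*} [Fintype ι] (v : ι → E) :
    convexHull ℝ (range v) = Fintype.linearCombination ℝ v '' stdSimplex ℝ ι := by
  classical
  rw [← convexHull_rangle_single_eq_stdSimplex, LinearMap.image_convexHull, ← range_comp]
  congr 2
  funext i
  simp [Fintype.linearCombination_apply_single]

lemma isExtreme_setOf_eq_of_forall_le {A : Set E} (f : E →ₗ[ℝ] ℝ) {c : ℝ}
    (hf : ∀ x ∈ A, f x ≤ c) : IsExtreme ℝ A {x ∈ A | f x = c} := by
  refine ⟨fun x hx => hx.1, fun x₁ hx₁ x₂ hx₂ x hx hseg => ⟨hx₁, ?_⟩⟩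
  obtain ⟨a, b, ha, hb, hab, rfl⟩ := hseg
  have h := hx.2
  simp only [map_add, map_smul, smul_eq_mul] at h
  have h₁ : 0 ≤ a * (c - f x₁) := mul_nonneg ha.le (by linarith [hf _ hx₁])
  have h₂ : 0 ≤ b * (c - f x₂) := mul_nonneg hb.le (by linarith [hf _ hx₂])
  have hsum : a * (c - f x₁) + b * (c - f x₂) = 0 := by linear_combination c * hab - h
  have := (mul_eq_zero.1 (show a * (c - f x₁) = 0 by linarith)).resolve_left ha.ne'
  linarith

lemma exists_pos_smul_mem_of_zero_mem_interior [TopologicalSpace E] [ContinuousSMul ℝ E]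
    {A : Set E} (h0 : (0 : E) ∈ interior A) (v : E) :
    ∃ t : ℝ, 0 < t ∧ t • v ∈ A := by
  have hT : Filter.Tendsto (fun t : ℝ => t • v) (nhdsWithin 0 (Ioi 0)) (nhds 0) :=
    tendsto_nhdsWithin_of_tendsto_nhds
      ((continuous_id.smul continuous_const).tendsto' 0 0 (zero_smul ℝ v))
  obtain ⟨t, htA, ht⟩ :=
    ((hT.eventually (mem_interior_iff_mem_nhds.1 h0)).and self_mem_nhdsWithin).exists
  exact ⟨t, ht, htA⟩

end General

lemma AffineIndependent.linearIndependent_of_eq_const {k E ι : Type*} [Field k] [AddCommGroup E]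
    [Module k E] {v : ι → E} (hv : AffineIndependent k v) (f : E →ₗ[k] k) {c : k} (hc : c ≠ 0)
    (hfv : ∀ i, f (v i) = c) : LinearIndependent k v := by
  refine linearIndependent_iff'.2 fun s g hg => affineIndependent_iff.1 hv s g ?_ hg
  have := congrArg f hg
  simp only [map_sum, map_smul, hfv, smul_eq_mul, map_zero, ← Finset.sum_mul] at this
  exact (mul_eq_zero.1 this).resolve_right hc

lemma exists_eq_single_of_nonneg_of_sum_eq_one {ι : Type*} [Fintype ι] [DecidableEq ι]
    {c : ι → ℤ} (hc : ∀ i, 0 ≤ c i) (hsum : ∑ i, c i = 1) : ∃ j, c = Pi.single j 1 := by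
  obtain ⟨j, -, hj⟩ := Finset.exists_ne_zero_of_sum_ne_zero (hsum ▸ one_ne_zero)
  rw [← Finset.add_sum_erase _ _ (Finset.mem_univ j)] at hsum
  have hrest := Finset.sum_nonneg fun i (_ : i ∈ Finset.univ.erase j) => hc i
  have hcj : c j = 1 := by have := hc j; omega
  have hzero := (Finset.sum_eq_zero_iff_of_nonneg (s := Finset.univ.erase j)
    fun i _ => hc i).1 (by omega)
  refine ⟨j, funext fun i => ?_⟩
  rcases eq_or_ne i j with rfl | hij
  · simp [hcj]
  · simp [hij, hzero i (Finset.mem_erase.2 ⟨hij, Finset.mem_univ i⟩)]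

lemma Matrix.range_vecCons_three {α : Type*} (x y z : α) : range ![x, y, z] = {x, y, z} := by
  rw [Matrix.range_cons, Matrix.range_cons, Matrix.range_cons, Matrix.range_empty, union_empty,
    singleton_union, singleton_union]

section Lattice

variable {d : ℕ}

def latticeSubmodule (d : ℕ) : Submodule ℤ (Fin d → ℝ) where
  carrier := {x | IsLatticePoint x}
  add_mem' {x y} hx hy i := by
    obtain ⟨m, hm⟩ := hx i
    obtain ⟨n, hn⟩ := hy i
    exact ⟨m + n, by simp [hm, hn]⟩
  zero_mem' _ := ⟨0, by simp⟩
  smul_mem' c x hx i := by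
    obtain ⟨n, hn⟩ := hx i
    exact ⟨c * n, by simp [hn]⟩

lemma isLatticePoint_sum_intCast_smul {ι : Type*} [Fintype ι] {s : ι → Fin d → ℝ}
    (hs : ∀ i, IsLatticePoint (s i)) (c : ι → ℤ) : IsLatticePoint (∑ i, (c i : ℝ) • s i) :=
  (latticeSubmodule d).sum_mem fun i _ => by
    rw [Int.cast_smul_eq_zsmul]
    exact zsmul_mem (hs i) (c i)

lemma isLatticePoint_sum_fract_smul {ι : Type*} [Fintype ι] {s : ι → Fin d → ℝ}
    (hlat : ∀ i, IsLatticePoint (s i)) {a : ι → ℝ} (ha : IsLatticePoint (∑ i, a i • s i)) :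
    IsLatticePoint (∑ i, Int.fract (a i) • s i) := by
  have : ∑ i, Int.fract (a i) • s i = ∑ i, a i • s i - ∑ i, (⌊a i⌋ : ℝ) • s i := by
    simp only [← Finset.sum_sub_distrib, ← sub_smul, Int.self_sub_floor]
  rw [this]
  exact (latticeSubmodule d).sub_mem ha (isLatticePoint_sum_intCast_smul hlat _)

lemma IsLatticePoint.exists_dotProduct_eq_intCast {x y : Fin d → ℝ} (hx : IsLatticePoint x)
    (hy : IsLatticePoint y) : ∃ n : ℤ, x ⬝ᵥ y = n := by
  choose m hm using hx
  choose n hn using hy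
  exact ⟨∑ i, m i * n i, by simp [dotProduct, hm, hn]⟩

lemma IsLatticePolytope.isLatticePoint_of_mem_extremePoints {P : Set (Fin d → ℝ)}
    (hP : IsLatticePolytope P) {v : Fin d → ℝ} (hv : v ∈ extremePoints ℝ P) : IsLatticePoint v := by
  obtain ⟨V, hV, rfl⟩ := hP
  exact hV v (extremePoints_convexHull_subset hv)

lemma IsZBasisFamily.sep_isLatticePoint_convexHull {n : ℕ} {s : Fin n → Fin d → ℝ}
    (hs : IsZBasisFamily s) : {w ∈ convexHull ℝ (range s) | IsLatticePoint w} = range s := by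
  obtain ⟨hli, hlat, hspan⟩ := hs
  refine Subset.antisymm ?_ fun w hw => ⟨subset_convexHull ℝ _ hw, ?_⟩
  · rintro _ ⟨hw, hwlat⟩
    rw [convexHull_range_eq_image_stdSimplex] at hw
    obtain ⟨g, ⟨hg0, hg1⟩, rfl⟩ := hw
    obtain ⟨c, hc⟩ := hspan _ hwlat
    have hgc : ∀ i, g i = c i :=
      Fintype.linearIndependent_iffₛ.1 hli _ _ (by simpa [Fintype.linearCombination_apply] using hc)
    obtain ⟨j, rfl⟩ : ∃ j, c = Pi.single j 1 :=
      exists_eq_single_of_nonneg_of_sum_eq_one (fun i => by exact_mod_cast hgc i ▸ hg0 i)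
        (by exact_mod_cast (Finset.sum_congr rfl fun i _ => hgc i) ▸ hg1)
    exact ⟨j, by simp [hc, Pi.single_apply, apply_ite]⟩
  · obtain ⟨i, rfl⟩ := hw
    exact hlat i

end Lattice

section Face

variable {d : ℕ} {P F : Set (Fin d → ℝ)}

lemma dotProd_eq_dotProduct (x y : Fin d → ℝ) : dotProd x y = x ⬝ᵥ y := rfl

lemma mem_dualPolytope {y : Fin d → ℝ} :
    y ∈ dualPolytope P ↔ ∀ x ∈ P, -1 ≤ x ⬝ᵥ y :=
  Iff.rfl

lemma IsFace.isExtreme (hF : IsFace P F) : IsExtreme ℝ P F := by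
  obtain ⟨u, c, hle, rfl⟩ := hF
  exact isExtreme_setOf_eq_of_forall_le (dotProductBilin ℝ ℝ u) hle

lemma IsFace.isCompact (hF : IsFace P F) (hP : IsCompact P) : IsCompact F := by
  obtain ⟨u, c, -, rfl⟩ := hF
  exact hP.inter_right (isClosed_eq (continuous_const.dotProduct continuous_id) continuous_const)

lemma IsFace.convex (hF : IsFace P F) (hP : Convex ℝ P) : Convex ℝ F := by
  obtain ⟨u, c, -, rfl⟩ := hF
  exact hP.inter (convex_hyperplane (dotProductBilin ℝ ℝ u).isLinear c)

lemma IsFace.convexHull_extremePoints {V : Finset (Fin d → ℝ)} (hF : IsFace (convexHull ℝ ↑V) F) :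
    convexHull ℝ (extremePoints ℝ F) = F := by
  have hfin : (extremePoints ℝ F).Finite := V.finite_toSet.subset
    (hF.isExtreme.extremePoints_subset_extremePoints.trans extremePoints_convexHull_subset)
  have hcomp := V.finite_toSet.isCompact_convexHull (𝕜 := ℝ)
  rw [← (hfin.isCompact_convexHull (𝕜 := ℝ)).isClosed.closure_eq]
  exact closure_convexHull_extremePoints (hF.isCompact hcomp) (hF.convex (convex_convexHull ℝ _))

lemma vectorSpan_eq_top_of_mem_interior {x : Fin d → ℝ} (hx : x ∈ interior P) :
    vectorSpan ℝ P = ⊤ := by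
  have : affineSpan ℝ P = ⊤ :=
    top_unique ((isOpen_interior.affineSpan_eq_top ⟨x, hx⟩) ▸ affineSpan_mono ℝ interior_subset)
  rw [← direction_affineSpan, this, AffineSubspace.direction_top]

lemma IsFacet.exists_mem_dualPolytope (h0 : (0 : Fin d → ℝ) ∈ interior P) (hd : 0 < d)
    (hF : IsFacet P F) : ∃ u ∈ dualPolytope P, ∀ w ∈ F, w ⬝ᵥ u = -1 := by
  obtain ⟨⟨u, c, hle, rfl⟩, ⟨w₀, hw₀⟩, hrank⟩ := hF
  have hu : u ≠ 0 := by
    rintro rfl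
    obtain rfl : c = 0 := by simpa [dotProd_eq_dotProduct] using hw₀.2.symm
    have hFP : {x ∈ P | dotProd 0 x = 0} = P := by ext; simp [dotProd_eq_dotProduct]
    rw [hFP, vectorSpan_eq_top_of_mem_interior h0, finrank_top, Module.finrank_fin_fun] at hrank
    omega
  obtain ⟨t, ht, htu⟩ := exists_pos_smul_mem_of_zero_mem_interior h0 u
  have huu : 0 < u ⬝ᵥ u := lt_of_le_of_ne (Finset.sum_nonneg fun i _ => mul_self_nonneg (u i))
    (Ne.symm (dotProduct_self_eq_zero.not.2 hu))
  have hc : 0 < c := by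
    have := hle _ htu
    simp only [dotProd_eq_dotProduct, dotProduct_smul, smul_eq_mul] at this
    nlinarith
  refine ⟨(-c⁻¹) • u, fun x hx => ?_, fun w hw => ?_⟩
  · have := hle x hx
    show -1 ≤ x ⬝ᵥ ((-c⁻¹) • u)
    rw [dotProduct_smul, smul_eq_mul, dotProduct_comm, neg_mul, neg_le_neg_iff,
      inv_mul_le_one₀ hc]
    exact this
  · rw [dotProduct_smul, smul_eq_mul, dotProduct_comm, ← dotProd_eq_dotProduct, hw.2, neg_mul,
      inv_mul_cancel₀ hc.ne']

lemma IsFacet.zero_notMem (h0 : (0 : Fin d → ℝ) ∈ interior P) (hd : 0 < d) (hF : IsFacet P F) :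
    (0 : Fin d → ℝ) ∉ F := fun h => by
  obtain ⟨u, -, huF⟩ := hF.exists_mem_dualPolytope h0 hd
  simpa using huF 0 h

lemma mem_extremePoints_dualPolytope {S : Set (Fin d → ℝ)} {u : Fin d → ℝ}
    (hu : u ∈ dualPolytope P) (hSP : S ⊆ P) (hS : Submodule.span ℝ S = ⊤)
    (hSu : ∀ w ∈ S, w ⬝ᵥ u = -1) : u ∈ extremePoints ℝ (dualPolytope P) := by
  refine ⟨hu, fun a ha b hb hab => ?_⟩
  have hface : ∀ w ∈ S, w ⬝ᵥ a = w ⬝ᵥ u := fun w hw => by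
    have hext := isExtreme_setOf_eq_of_forall_le (-dotProductBilin ℝ ℝ w) (c := 1)
      fun y hy => by simpa [neg_le] using mem_dualPolytope.1 hy w (hSP hw)
    have := (hext.left_mem_of_mem_openSegment ha hb ⟨hu, by simp [hSu w hw]⟩ hab).2
    simp only [LinearMap.neg_apply, dotProductBilin_apply_apply] at this
    rw [hSu w hw]
    linarith
  have := LinearMap.ext_on hS (f := (dotProductBilin ℝ ℝ).flip a)
    (g := (dotProductBilin ℝ ℝ).flip u)
    fun w hw => by simpa using hface w hw
  funext i
  simpa using LinearMap.congr_fun this (Pi.single i 1)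

lemma IsTerminalPolytope.sep_isLatticePoint_of_isFace (hP : IsTerminalPolytope P) (hF : IsFace P F)
    (h0 : (0 : Fin d → ℝ) ∉ F) : {w ∈ F | IsLatticePoint w} = extremePoints ℝ F := by
  have hlat : ∀ w ∈ P, (IsLatticePoint w ↔ w = 0 ∨ w ∈ extremePoints ℝ P) := fun w hw => by
    simpa [hw] using congrArg (w ∈ ·) hP
  rw [hF.isExtreme.extremePoints_eq]
  ext w
  constructor
  · rintro ⟨hwF, hw⟩
    exact ⟨hwF, ((hlat w (hF.isExtreme.subset hwF)).1 hw).resolve_left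
      (ne_of_mem_of_not_mem hwF h0)⟩
  · rintro ⟨hwF, hw⟩
    exact ⟨hwF, (hlat w (hF.isExtreme.subset hwF)).2 (Or.inr hw)⟩

end Face

section Triangle

variable {d : ℕ}

lemma LinearIndependent.exists_eq_single_of_isLatticePoint {ι : Type*} [Fintype ι]
    [DecidableEq ι] {s : ι → Fin d → ℝ} (hs : LinearIndependent ℝ s)
    (hempty : {w ∈ convexHull ℝ (range s) | IsLatticePoint w} = range s) {g : ι → ℝ}
    (hg : g ∈ stdSimplex ℝ ι) (hlat : IsLatticePoint (∑ i, g i • s i)) :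
    ∃ j, g = Pi.single j 1 := by
  have hmem : ∑ i, g i • s i ∈ range s := hempty ▸
    ⟨mem_convexHull_of_exists_fintype g s hg.1 hg.2 (mem_range_self ·) rfl, hlat⟩
  obtain ⟨j, hj⟩ := hmem
  exact ⟨j, funext <| Fintype.linearIndependent_iffₛ.1 hs _ _ (by simp [← hj, Pi.single_apply])⟩

lemma LinearIndependent.sum_eq_zero_of_isLatticePoint {s : Fin 3 → Fin d → ℝ}
    (hs : LinearIndependent ℝ s) (hlat : ∀ i, IsLatticePoint (s i))
    (hempty : {w ∈ convexHull ℝ (range s) | IsLatticePoint w} = range s) {f : Fin 3 → ℝ}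
    (hf0 : ∀ i, 0 ≤ f i) (hf1 : ∀ i, f i < 1) (hfl : IsLatticePoint (∑ i, f i • s i)) {n : ℤ}
    (hn : ∑ i, f i = n) : ∑ i, f i = 0 := by
  have hlo : 0 ≤ n := by exact_mod_cast hn ▸ Finset.sum_nonneg fun i _ => hf0 i
  have hhi : n < 3 := by
    have : (n : ℝ) < 3 := by rw [← hn, Fin.sum_univ_three]; linarith [hf1 0, hf1 1, hf1 2]
    exact_mod_cast this
  obtain rfl | rfl | rfl : n = 0 ∨ n = 1 ∨ n = 2 := by omega
  · exact_mod_cast hn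
  · obtain ⟨j, hj⟩ := hs.exists_eq_single_of_isLatticePoint hempty ⟨hf0, by exact_mod_cast hn⟩ hfl
    simpa [hj] using hf1 j
  · have hlat' : IsLatticePoint (∑ i, (1 - f i) • s i) := by
      have : ∑ i, (1 - f i) • s i = ∑ i, s i - ∑ i, f i • s i := by
        simp only [sub_smul, one_smul, Finset.sum_sub_distrib]
      rw [this]
      exact (latticeSubmodule d).sub_mem (sum_mem fun i _ => hlat i) hfl
    have hsum : ∑ i, (1 - f i) = 1 := by
      rw [Finset.sum_sub_distrib, hn]
      norm_num
    obtain ⟨j, hj⟩ := hs.exists_eq_single_of_isLatticePoint hempty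
      ⟨fun i => by linarith [hf1 i], hsum⟩ hlat'
    have hj1 : j + 1 ≠ j := by simp
    have := congrFun hj (j + 1)
    rw [Pi.single_eq_of_ne hj1] at this
    linarith [hf1 (j + 1)]

end Triangle

theorem isZBasisFamily_of_dotProduct_eq_neg_one {s : Fin 3 → Fin 3 → ℝ}
    (hs : LinearIndependent ℝ s) (hlat : ∀ i, IsLatticePoint (s i))
    {u : Fin 3 → ℝ} (hu : IsLatticePoint u) (hsu : ∀ i, s i ⬝ᵥ u = -1)
    (hempty : {w ∈ convexHull ℝ (range s) | IsLatticePoint w} = range s) :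
    IsZBasisFamily s := by
  refine ⟨hs, hlat, fun w hw => ?_⟩
  obtain ⟨a, rfl⟩ := (Submodule.mem_span_range_iff_exists_fun ℝ).1
    ((hs.span_eq_top_of_card_eq_finrank (by simp)).symm ▸ Submodule.mem_top (x := w))
  have hfrac := isLatticePoint_sum_fract_smul hlat hw
  obtain ⟨n, hn⟩ := hfrac.exists_dotProduct_eq_intCast hu
  have hsum : ∑ i, Int.fract (a i) = 0 :=
    hs.sum_eq_zero_of_isLatticePoint hlat hempty (fun i => Int.fract_nonneg _)
      (fun i => Int.fract_lt_one _) hfrac (n := -n) (by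
        simp only [sum_dotProduct, smul_dotProduct, hsu, smul_eq_mul, mul_neg, mul_one,
          Finset.sum_neg_distrib] at hn
        push_cast
        linarith)
  have hfz := (Finset.sum_eq_zero_iff_of_nonneg fun i _ => Int.fract_nonneg (a i)).1 hsum
  refine ⟨fun i => ⌊a i⌋, Finset.sum_congr rfl fun i _ => ?_⟩
  congr 1
  linarith [Int.floor_add_fract (a i), hfz i (Finset.mem_univ i)]

section Reflexive

variable {P F : Set (Fin 3 → ℝ)}

theorem IsReflexive.isZBasisFamily_of_mem_facet (hP : IsReflexive P) (hF : IsFacet P F)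
    {s : Fin 3 → Fin 3 → ℝ} (hsF : ∀ i, s i ∈ F) (hlat : ∀ i, IsLatticePoint (s i))
    (hs : AffineIndependent ℝ s)
    (hempty : {w ∈ convexHull ℝ (range s) | IsLatticePoint w} = range s) : IsZBasisFamily s := by
  obtain ⟨u, hu, huF⟩ := hF.exists_mem_dualPolytope hP.2.1 (by norm_num)
  have hsu : ∀ i, s i ⬝ᵥ u = -1 := fun i => huF _ (hsF i)
  have hli : LinearIndependent ℝ s :=
    hs.linearIndependent_of_eq_const ((dotProductBilin ℝ ℝ).flip u) (c := -1) (by norm_num)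
      fun i => by simpa using hsu i
  have hext : u ∈ extremePoints ℝ (dualPolytope P) :=
    mem_extremePoints_dualPolytope hu (range_subset_iff.2 fun i => hF.1.isExtreme.subset (hsF i))
      (hli.span_eq_top_of_card_eq_finrank (by simp)) (forall_mem_range.2 hsu)
  exact isZBasisFamily_of_dotProduct_eq_neg_one hli hlat
    (hP.2.2.isLatticePoint_of_mem_extremePoints hext) hsu hempty

theorem IsReflexive.isSmoothPolytope (hP : IsReflexive P) (hsimp : IsSimplicial P)
    (hterm : IsTerminalPolytope P) : IsSmoothPolytope P := by
  intro F hF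
  obtain ⟨x, y, z, -, -, -, hext⟩ := ncard_eq_three.1 (hsimp F hF)
  have hrange : range ![x, y, z] = extremePoints ℝ F := by rw [hext, Matrix.range_vecCons_three]
  obtain ⟨V, -, hV⟩ := hP.1
  have hhull : convexHull ℝ (range ![x, y, z]) = F := by
    rw [hrange]
    exact (hV ▸ hF.1 : IsFace (convexHull ℝ ↑V) F).convexHull_extremePoints
  have hlatF := hterm.sep_isLatticePoint_of_isFace hF.1 (hF.zero_notMem hP.2.1 (by norm_num))
  have hmem : ∀ i, ![x, y, z] i ∈ {w ∈ F | IsLatticePoint w} := fun i =>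
    hlatF ▸ hrange ▸ mem_range_self i
  refine ⟨![x, y, z], hrange.symm, hP.isZBasisFamily_of_mem_facet hF (fun i => (hmem i).1)
    (fun i => (hmem i).2) ?_ (by rw [hhull, hlatF, hrange])⟩
  rw [affineIndependent_iff_finrank_vectorSpan_eq ℝ _ (n := 2) (by simp), ← vectorSpan_convexHull,
    hhull]
  exact hF.2.2

end Reflexive

/-- In a three-dimensional reflexive polytope, three lattice points in a common
facet form a `ℤ`-basis of `ℤ³` iff their convex hull is a two-dimensional empty triangle;
consequently every three-dimensional simplicial terminal reflexive polytope is smooth. -/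
theorem dim_three_basis_lemma (P : Set (Fin 3 → ℝ)) (hP : IsReflexive P) :
    (∀ x y z : Fin 3 → ℝ, IsLatticePoint x → IsLatticePoint y → IsLatticePoint z →
      (∃ F, IsFacet P F ∧ x ∈ F ∧ y ∈ F ∧ z ∈ F) →
      (IsZBasisFamily ![x, y, z] ↔
        (Module.finrank ℝ (vectorSpan ℝ (convexHull ℝ ({x, y, z} : Set (Fin 3 → ℝ)))) = 2 ∧
          {w ∈ convexHull ℝ ({x, y, z} : Set (Fin 3 → ℝ)) | IsLatticePoint w} = {x, y, z}))) ∧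
    (∀ Q : Set (Fin 3 → ℝ), IsReflexive Q → IsSimplicial Q → IsTerminalPolytope Q →
      IsSmoothPolytope Q) := by
  refine ⟨fun x y z hx hy hz ⟨F, hF, hxF, hyF, hzF⟩ => ?_,
    fun Q hQ hsimp hterm => hQ.isSmoothPolytope hsimp hterm⟩
  rw [← Matrix.range_vecCons_three, vectorSpan_convexHull,
    ← affineIndependent_iff_finrank_vectorSpan_eq ℝ _ (by simp)]
  refine ⟨fun h => ⟨h.1.affineIndependent, h.sep_isLatticePoint_convexHull⟩,
    fun ⟨haff, hempty⟩ => hP.isZBasisFamily_of_mem_facet hF ?_ ?_ haff hempty⟩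
  · intro i; fin_cases i <;> assumption
  · intro i; fin_cases i <;> assumption

end
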